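/- arXiv:1502.04283 — 6 statements merged into one kernel-verified Lean document; each statement's English description precedes it below -/
import Mathlib

section
/- Let 0 < α ≤ β be real numbers with α + β > 1, and let ε > 0. Then there exists C > 0 (depending only on α, β, ε) such that for all real numbers a and b, ∫_ℝ dt / (⟨t−a⟩^α · ⟨t−b⟩^β) ≤ C · ⟨a−b⟩^{−γ}, where γ = α + β − 1 if β < 1, γ = α − ε if β = 1, and γ = α if β > 1. -/
open MeasureTheory
open scoped ENNReal

/-- The Japanese bracket `⟨x⟩ = (1 + |x|²)^{1/2}`. -/
noncomputable def jb (x : ℝ) : ℝ := Real.sqrt (1 + x ^ 2)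

namespace JBAux

lemma jb_pos (x : ℝ) : 0 < jb x := Real.sqrt_pos.2 (by positivity)

lemma jb_nonneg (x : ℝ) : 0 ≤ jb x := (jb_pos x).le

lemma one_le_jb (x : ℝ) : 1 ≤ jb x := by
  rw [show (1:ℝ) = Real.sqrt 1 by rw [Real.sqrt_one]]
  exact Real.sqrt_le_sqrt (by nlinarith [sq_nonneg x])

lemma abs_le_jb (x : ℝ) : |x| ≤ jb x := by
  rw [← Real.sqrt_sq_eq_abs]
  exact Real.sqrt_le_sqrt (by nlinarith)

lemma le_jb (x : ℝ) : x ≤ jb x := (le_abs_self x).trans (abs_le_jb x)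

lemma jb_mono {x y : ℝ} (h : |x| ≤ |y|) : jb x ≤ jb y := by
  apply Real.sqrt_le_sqrt
  nlinarith [sq_abs x, sq_abs y, abs_nonneg x, abs_nonneg y]

lemma jb_neg (x : ℝ) : jb (-x) = jb x := by simp [jb]

lemma jb_abs (x : ℝ) : jb |x| = jb x := by simp [jb, sq_abs]

lemma jb_zero : jb 0 = 1 := by simp [jb]

lemma jb_one : jb 1 = Real.sqrt 2 := by norm_num [jb]

lemma jb_le_two_mul {c x : ℝ} (h : |c| ≤ 2 * |x|) : jb c ≤ 2 * jb x := by
  have h4 : (2 : ℝ) * jb x = Real.sqrt (4 * (1 + x ^ 2)) := by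
    rw [show (4:ℝ) * (1 + x^2) = 2^2 * (1+x^2) by ring, Real.sqrt_mul (by positivity),
      Real.sqrt_sq (by norm_num : (0:ℝ) ≤ 2), jb]
  rw [h4]
  apply Real.sqrt_le_sqrt
  nlinarith [sq_abs c, sq_abs x, abs_nonneg c, abs_nonneg x]

lemma jb_le_sqrt_two_mul {M : ℝ} (hM : 1 ≤ M) : jb M ≤ Real.sqrt 2 * M := by
  have : Real.sqrt 2 * M = Real.sqrt (2 * M ^ 2) := by
    rw [Real.sqrt_mul (by norm_num), Real.sqrt_sq (by linarith)]
  rw [this]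
  apply Real.sqrt_le_sqrt
  nlinarith

lemma jb_rpow_pos (x p : ℝ) : 0 < jb x ^ p := Real.rpow_pos_of_pos (jb_pos x) p

lemma inv_jb_rpow_nonneg (x p : ℝ) : 0 ≤ (jb x ^ p)⁻¹ := inv_nonneg.2 (jb_rpow_pos x p).le

lemma inv_jb_rpow_anti {x : ℝ} {p q : ℝ} (h : p ≤ q) : (jb x ^ q)⁻¹ ≤ (jb x ^ p)⁻¹ := by
  apply inv_anti₀ (jb_rpow_pos x p)
  exact Real.rpow_le_rpow_of_exponent_le (one_le_jb x) h

lemma jb_rpow_sub (x a b : ℝ) : jb x ^ (a - b) = jb x ^ a * (jb x ^ b)⁻¹ := by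
  rw [← Real.rpow_neg (jb_nonneg x), ← Real.rpow_add (jb_pos x), sub_eq_add_neg]

lemma inv_jb_rpow_mul (x a b : ℝ) : (jb x ^ a)⁻¹ * (jb x ^ b)⁻¹ = (jb x ^ (a + b))⁻¹ := by
  rw [Real.rpow_add (jb_pos x), mul_inv]

lemma inv_jb_rpow_le_of_jb_le {x y : ℝ} {p : ℝ} (hp : 0 ≤ p) (h : jb x ≤ jb y) :
    (jb y ^ p)⁻¹ ≤ (jb x ^ p)⁻¹ := by
  apply inv_anti₀ (jb_rpow_pos x p)
  exact Real.rpow_le_rpow (jb_nonneg x) h hp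

/-- peel: if `jb c ≤ 2 * jb x` then `(jb x ^ p)⁻¹ ≤ 2 ^ p * (jb c ^ p)⁻¹`. -/
lemma inv_jb_rpow_peel {c x p : ℝ} (hp : 0 ≤ p) (h : jb c ≤ 2 * jb x) :
    (jb x ^ p)⁻¹ ≤ 2 ^ p * (jb c ^ p)⁻¹ := by
  have h1 : jb c ^ p ≤ (2 * jb x) ^ p := Real.rpow_le_rpow (jb_nonneg c) h hp
  have h2 : (2 * jb x) ^ p = 2 ^ p * jb x ^ p := Real.mul_rpow (by norm_num) (jb_nonneg x)
  have h3 : (jb x ^ p)⁻¹ = 2 ^ p * ((2:ℝ) ^ p * jb x ^ p)⁻¹ := by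
    rw [mul_inv]
    rw [← mul_assoc, mul_inv_cancel₀ (by positivity : (2:ℝ)^p ≠ 0), one_mul]
  rw [h3]
  apply mul_le_mul_of_nonneg_left _ (by positivity)
  apply inv_anti₀ (jb_rpow_pos c p)
  rw [← h2]; exact h1

lemma continuous_jb : Continuous jb :=
  Real.continuous_sqrt.comp (continuous_const.add (continuous_pow 2))

lemma measurable_F (p : ℝ) : Measurable (fun s : ℝ => ENNReal.ofReal ((jb s ^ p)⁻¹)) := by
  apply ENNReal.measurable_ofReal.comp
  apply Measurable.inv
  exact (continuous_jb.rpow_const (fun x => Or.inl (jb_pos x).ne')).measurable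

end JBAux

section Chunk2
open JBAux Set

lemma integrable_jb_rpow {r : ℝ} (hr : 1 < r) :
    Integrable (fun x : ℝ => (jb x ^ r)⁻¹) := by
  have hfin : (Module.finrank ℝ ℝ : ℝ) < r := by simpa using hr
  have h := integrable_rpow_neg_one_add_norm_sq (E := ℝ) (μ := volume) hfin
  apply h.congr
  filter_upwards with x
  have hx : (0:ℝ) ≤ 1 + x ^ 2 := by positivity
  rw [show ‖x‖ ^ 2 = x ^ 2 by rw [Real.norm_eq_abs, sq_abs]]
  rw [jb, Real.sqrt_eq_rpow, ← Real.rpow_mul hx, ← Real.rpow_neg hx]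
  congr 1; ring

lemma lintegral_comp_neg (f : ℝ → ℝ≥0∞) : ∫⁻ x : ℝ, f (-x) = ∫⁻ x : ℝ, f x :=
  (Measure.measurePreserving_neg (volume : Measure ℝ)).lintegral_comp_emb
    (MeasurableEquiv.neg ℝ).measurableEmbedding f

end Chunk2
section Chunk3
open JBAux Set

lemma lintegral_jb_rpow_eq {r : ℝ} (hr : 1 < r) :
    ∫⁻ x : ℝ, ENNReal.ofReal ((jb x ^ r)⁻¹) = ENNReal.ofReal (∫ x : ℝ, (jb x ^ r)⁻¹) :=
  (ofReal_integral_eq_lintegral_ofReal (integrable_jb_rpow hr)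
    (Filter.Eventually.of_forall fun x => inv_jb_rpow_nonneg x r)).symm

lemma lintegral_set_neg (F : ℝ → ℝ≥0∞) (hF : ∀ x, F (-x) = F x) (S : Set ℝ)
    (hS : MeasurableSet S) :
    ∫⁻ s in (fun x : ℝ => -x) ⁻¹' S, F s = ∫⁻ s in S, F s := by
  rw [← lintegral_indicator hS, ← lintegral_indicator (measurable_neg hS)]
  rw [← lintegral_comp_neg (S.indicator F)]
  congr 1
  funext x
  by_cases hx : x ∈ (fun x : ℝ => -x) ⁻¹' S
  · rw [Set.indicator_of_mem hx, Set.indicator_of_mem (by exact hx), hF]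
  · rw [Set.indicator_of_notMem hx, Set.indicator_of_notMem (by exact hx)]

lemma near_bound {p : ℝ} (hp0 : 0 < p) (hp1 : p < 1) :
    ∃ C : ℝ, 0 < C ∧ ∀ M : ℝ, 0 ≤ M →
      ∫⁻ s in Icc (-M) M, ENNReal.ofReal ((jb s ^ p)⁻¹) ≤
        ENNReal.ofReal (C * jb M ^ (1 - p)) := by
  have h1p : (0:ℝ) < 1 - p := by linarith
  refine ⟨2 / (1 - p), by positivity, fun M hM => ?_⟩
  have half : ∫⁻ s in Icc (0:ℝ) M, ENNReal.ofReal ((jb s ^ p)⁻¹) ≤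
      ENNReal.ofReal (M ^ (1 - p) / (1 - p)) := by
    have hres : (volume : Measure ℝ).restrict (Icc (0:ℝ) M) = volume.restrict (Ioc 0 M) :=
      (Measure.restrict_congr_set Ioc_ae_eq_Icc).symm
    rw [hres]
    have int : IntegrableOn (fun s : ℝ => s ^ (-p)) (Ioc 0 M) := by
      have h := intervalIntegral.intervalIntegrable_rpow'
        (show (-1:ℝ) < -p by linarith) (a := 0) (b := M)
      have := intervalIntegrable_iff.mp h
      rwa [Set.uIoc_of_le hM] at this
    have step1 : ∫⁻ s in Ioc (0:ℝ) M, ENNReal.ofReal ((jb s ^ p)⁻¹) ≤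
        ∫⁻ s in Ioc (0:ℝ) M, ENNReal.ofReal (s ^ (-p)) := by
      refine lintegral_mono_ae ?_
      filter_upwards [ae_restrict_mem measurableSet_Ioc] with s hs
      refine ENNReal.ofReal_le_ofReal ?_
      rw [Real.rpow_neg hs.1.le]
      exact inv_anti₀ (Real.rpow_pos_of_pos hs.1 p)
        (Real.rpow_le_rpow hs.1.le (le_jb s) hp0.le)
    have step2 : ∫⁻ s in Ioc (0:ℝ) M, ENNReal.ofReal (s ^ (-p)) =
        ENNReal.ofReal (∫ s in Ioc (0:ℝ) M, s ^ (-p)) := by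
      rw [← ofReal_integral_eq_lintegral_ofReal int ?_]
      filter_upwards [ae_restrict_mem measurableSet_Ioc] with s hs
      exact Real.rpow_nonneg hs.1.le _
    have step3 : ∫ s in Ioc (0:ℝ) M, s ^ (-p) = M ^ (1 - p) / (1 - p) := by
      rw [← intervalIntegral.integral_of_le hM, integral_rpow (Or.inl (by linarith))]
      rw [Real.zero_rpow (by linarith : (-p) + 1 ≠ 0)]
      rw [show -p + 1 = 1 - p by ring]
      ring
    calc ∫⁻ s in Ioc (0:ℝ) M, ENNReal.ofReal ((jb s ^ p)⁻¹)
        ≤ ∫⁻ s in Ioc (0:ℝ) M, ENNReal.ofReal (s ^ (-p)) := step1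
      _ = ENNReal.ofReal (M ^ (1 - p) / (1 - p)) := by rw [step2, step3]
  have hsym : ∫⁻ s in Icc (-M) (0:ℝ), ENNReal.ofReal ((jb s ^ p)⁻¹) =
      ∫⁻ s in Icc (0:ℝ) M, ENNReal.ofReal ((jb s ^ p)⁻¹) := by
    have hpre : (fun x : ℝ => -x) ⁻¹' Icc (0:ℝ) M = Icc (-M) (0:ℝ) := by
      ext x; simp only [Set.mem_preimage, Set.mem_Icc]
      constructor <;> intro h <;> constructor <;> linarith [h.1, h.2]
    have := lintegral_set_neg (fun s => ENNReal.ofReal ((jb s ^ p)⁻¹))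
      (fun x => by simp only [jb_neg]) (Icc 0 M) measurableSet_Icc
    rw [hpre] at this
    exact this
  have cover : ∫⁻ s in Icc (-M) M, ENNReal.ofReal ((jb s ^ p)⁻¹) ≤
      (∫⁻ s in Icc (-M) (0:ℝ), ENNReal.ofReal ((jb s ^ p)⁻¹)) +
      ∫⁻ s in Icc (0:ℝ) M, ENNReal.ofReal ((jb s ^ p)⁻¹) := by
    refine le_trans (lintegral_mono_set ?_) (lintegral_union_le _ _ _)
    intro x hx
    rcases le_total x 0 with h | h
    · exact Or.inl ⟨hx.1, h⟩
    · exact Or.inr ⟨h, hx.2⟩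
  calc ∫⁻ s in Icc (-M) M, ENNReal.ofReal ((jb s ^ p)⁻¹)
      ≤ ENNReal.ofReal (M ^ (1 - p) / (1 - p)) + ENNReal.ofReal (M ^ (1 - p) / (1 - p)) := by
        refine cover.trans (add_le_add ?_ half)
        rw [hsym]; exact half
    _ = ENNReal.ofReal (M ^ (1 - p) / (1 - p) + M ^ (1 - p) / (1 - p)) :=
        (ENNReal.ofReal_add (by positivity) (by positivity)).symm
    _ ≤ ENNReal.ofReal (2 / (1 - p) * jb M ^ (1 - p)) := by
        refine ENNReal.ofReal_le_ofReal ?_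
        have hMle : M ^ (1 - p) ≤ jb M ^ (1 - p) :=
          Real.rpow_le_rpow hM (le_jb M) h1p.le
        rw [show M ^ (1-p)/(1-p) + M ^ (1-p)/(1-p) = 2/(1-p) * M ^ (1-p) by ring]
        exact mul_le_mul_of_nonneg_left hMle (by positivity)

end Chunk3
section Chunk4
set_option maxHeartbeats 1000000
open JBAux Set

lemma tail_bound {r : ℝ} (hr : 1 < r) :
    ∃ C : ℝ, 0 < C ∧ ∀ M : ℝ, 0 ≤ M →
      ∫⁻ s in {s : ℝ | M ≤ |s|}, ENNReal.ofReal ((jb s ^ r)⁻¹) ≤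
        ENNReal.ofReal (C * jb M ^ (1 - r)) := by
  have hr1 : (0:ℝ) < r - 1 := by linarith
  set A := ∫ x : ℝ, (jb x ^ r)⁻¹ with hA
  have hA0 : 0 ≤ A := integral_nonneg fun x => inv_jb_rpow_nonneg x r
  set K := Real.sqrt 2 ^ (r - 1) with hK
  have hs2 : (0:ℝ) < Real.sqrt 2 := Real.sqrt_pos.2 two_pos
  have hK0 : 0 < K := Real.rpow_pos_of_pos hs2 _
  have hCpos : 0 < (A + 2 / (r - 1) + 1) * K :=
    mul_pos (by linarith [div_pos (show (0:ℝ) < 2 by norm_num) hr1]) hK0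
  refine ⟨(A + 2 / (r - 1) + 1) * K, hCpos, fun M hM => ?_⟩
  have hKj : Real.sqrt 2 ^ (r - 1) * Real.sqrt 2 ^ (1 - r) = 1 := by
    rw [← Real.rpow_add hs2]; norm_num
  have hj0 : (0:ℝ) ≤ jb M ^ (1 - r) := (jb_rpow_pos M _).le
  rcases lt_or_ge M 1 with hM1 | hM1
  · -- small M : use the full-line integral
    have h1 : ∫⁻ s in {s : ℝ | M ≤ |s|}, ENNReal.ofReal ((jb s ^ r)⁻¹) ≤
        ENNReal.ofReal A := by
      rw [hA, ← lintegral_jb_rpow_eq hr]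
      exact setLIntegral_le_lintegral _ _
    refine h1.trans (ENNReal.ofReal_le_ofReal ?_)
    have hjbM : jb M ≤ Real.sqrt 2 := by
      rw [← jb_one]
      exact jb_mono (by rw [abs_of_nonneg hM, abs_one]; exact hM1.le)
    have hge : Real.sqrt 2 ^ (1 - r) ≤ jb M ^ (1 - r) :=
      Real.rpow_le_rpow_of_nonpos (jb_pos M) hjbM (by linarith)
    have h2 : (1:ℝ) ≤ K * jb M ^ (1 - r) := by
      calc (1:ℝ) = K * Real.sqrt 2 ^ (1 - r) := by rw [hK, hKj]
        _ ≤ K * jb M ^ (1 - r) := mul_le_mul_of_nonneg_left hge hK0.le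
    nlinarith [mul_le_mul_of_nonneg_left h2 hA0, div_pos (by norm_num : (0:ℝ) < 2) hr1,
      mul_nonneg hK0.le hj0]
  · -- large M
    have hM0 : (0:ℝ) < M := lt_of_lt_of_le one_pos hM1
    have ici : ∫⁻ s in Ici M, ENNReal.ofReal ((jb s ^ r)⁻¹) ≤
        ENNReal.ofReal (M ^ (1 - r) / (r - 1)) := by
      have hres : (volume : Measure ℝ).restrict (Ici M) = volume.restrict (Ioi M) :=
        (Measure.restrict_congr_set Ioi_ae_eq_Ici).symm
      rw [hres]
      have int : IntegrableOn (fun s : ℝ => s ^ (-r)) (Ioi M) :=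
        integrableOn_Ioi_rpow_of_lt (by linarith) hM0
      have step1 : ∫⁻ s in Ioi M, ENNReal.ofReal ((jb s ^ r)⁻¹) ≤
          ∫⁻ s in Ioi M, ENNReal.ofReal (s ^ (-r)) := by
        refine lintegral_mono_ae ?_
        filter_upwards [ae_restrict_mem measurableSet_Ioi] with s hs
        have hs0 : (0:ℝ) < s := hM0.trans hs
        refine ENNReal.ofReal_le_ofReal ?_
        rw [Real.rpow_neg hs0.le]
        exact inv_anti₀ (Real.rpow_pos_of_pos hs0 r)
          (Real.rpow_le_rpow hs0.le (le_jb s) (by linarith))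
      have step2 : ∫⁻ s in Ioi M, ENNReal.ofReal (s ^ (-r)) =
          ENNReal.ofReal (∫ s in Ioi M, s ^ (-r)) := by
        rw [← ofReal_integral_eq_lintegral_ofReal int ?_]
        filter_upwards [ae_restrict_mem measurableSet_Ioi] with s hs
        exact Real.rpow_nonneg (hM0.trans hs).le _
      have step3 : ∫ s in Ioi M, s ^ (-r) = M ^ (1 - r) / (r - 1) := by
        rw [integral_Ioi_rpow_of_lt (by linarith) hM0]
        rw [show -r + 1 = 1 - r by ring, div_eq_div_iff (by linarith) (by linarith)]
        ring
      rw [← step3, ← step2]; exact step1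
    have iic : ∫⁻ s in Iic (-M), ENNReal.ofReal ((jb s ^ r)⁻¹) =
        ∫⁻ s in Ici M, ENNReal.ofReal ((jb s ^ r)⁻¹) := by
      have hpre : (fun x : ℝ => -x) ⁻¹' Ici M = Iic (-M) := by
        ext x; simp only [Set.mem_preimage, Set.mem_Ici, Set.mem_Iic]
        constructor <;> intro h <;> linarith
      have := lintegral_set_neg (fun s => ENNReal.ofReal ((jb s ^ r)⁻¹))
        (fun x => by simp only [jb_neg]) (Ici M) measurableSet_Ici
      rw [hpre] at this
      exact this
    have cover : ∫⁻ s in {s : ℝ | M ≤ |s|}, ENNReal.ofReal ((jb s ^ r)⁻¹) ≤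
        (∫⁻ s in Iic (-M), ENNReal.ofReal ((jb s ^ r)⁻¹)) +
        ∫⁻ s in Ici M, ENNReal.ofReal ((jb s ^ r)⁻¹) := by
      refine le_trans (lintegral_mono_set ?_) (lintegral_union_le _ _ _)
      intro x hx
      rcases le_total x 0 with h | h
      · left; simp only [Set.mem_Iic]
        have : |x| = -x := abs_of_nonpos h
        simp only [Set.mem_setOf_eq, this] at hx; linarith
      · right; simp only [Set.mem_Ici]
        have : |x| = x := abs_of_nonneg h
        simp only [Set.mem_setOf_eq, this] at hx; linarith
    have hMK : M ^ (1 - r) ≤ K * jb M ^ (1 - r) := by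
      have hjbM : jb M ≤ Real.sqrt 2 * M := jb_le_sqrt_two_mul hM1
      have hge : (Real.sqrt 2 * M) ^ (1 - r) ≤ jb M ^ (1 - r) :=
        Real.rpow_le_rpow_of_nonpos (jb_pos M) hjbM (by linarith)
      have hmul : (Real.sqrt 2 * M) ^ (1 - r) =
          Real.sqrt 2 ^ (1 - r) * M ^ (1 - r) := Real.mul_rpow hs2.le hM0.le
      calc M ^ (1 - r) = K * (Real.sqrt 2 ^ (1 - r) * M ^ (1 - r)) := by
            rw [← mul_assoc, hK, hKj, one_mul]
        _ ≤ K * jb M ^ (1 - r) := by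
            rw [← hmul]; exact mul_le_mul_of_nonneg_left hge hK0.le
    calc ∫⁻ s in {s : ℝ | M ≤ |s|}, ENNReal.ofReal ((jb s ^ r)⁻¹)
        ≤ ENNReal.ofReal (M ^ (1 - r) / (r - 1)) + ENNReal.ofReal (M ^ (1 - r) / (r - 1)) := by
          refine cover.trans (add_le_add ?_ ici)
          rw [iic]; exact ici
      _ = ENNReal.ofReal (M ^ (1 - r) / (r - 1) + M ^ (1 - r) / (r - 1)) := by
          rw [ENNReal.ofReal_add] <;> positivity
      _ ≤ ENNReal.ofReal ((A + 2 / (r - 1) + 1) * K * jb M ^ (1 - r)) := by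
          refine ENNReal.ofReal_le_ofReal ?_
          have h2 : (0:ℝ) < 2 / (r - 1) := by positivity
          have e1 : M ^ (1-r)/(r-1) + M ^ (1-r)/(r-1) = 2/(r-1) * M ^ (1-r) := by
            field_simp
            ring
          have h3 := mul_le_mul_of_nonneg_left hMK h2.le
          have h4 : 0 ≤ (A + 1) * (K * jb M ^ (1 - r)) :=
            mul_nonneg (by linarith) (mul_nonneg hK0.le hj0)
          rw [e1]
          nlinarith [h3, h4]
  
end Chunk4
section Chunk5
open JBAux Set

lemma crit_bound {p q : ℝ} (hp0 : 0 < p) (hp1 : p < 1) (hq0 : 0 < q) (hq1 : q < 1)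
    (hpq : 1 < p + q) :
    ∃ C : ℝ, 0 < C ∧ ∀ c : ℝ,
      ∫⁻ s : ℝ, ENNReal.ofReal ((jb s ^ p)⁻¹ * (jb (s - c) ^ q)⁻¹) ≤
        ENNReal.ofReal (C * jb c ^ (1 - (p + q))) := by
  obtain ⟨C₁, hC₁, hnear₁⟩ := near_bound hp0 hp1
  obtain ⟨C₂, hC₂, hnear₂⟩ := near_bound hq0 hq1
  obtain ⟨C₃, hC₃, htail⟩ := tail_bound hpq
  refine ⟨2 ^ q * C₁ + 2 ^ p * C₂ + C₃ + C₃, by positivity, fun c => ?_⟩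
  set R := |c| with hR
  have hR0 : (0:ℝ) ≤ R := abs_nonneg c
  have hjbR : jb R = jb c := jb_abs c
  have hk1 : (0:ℝ) ≤ 2 ^ q * (jb c ^ q)⁻¹ :=
    mul_nonneg (Real.rpow_nonneg (by norm_num) q) (inv_jb_rpow_nonneg c q)
  have hk2 : (0:ℝ) ≤ 2 ^ p * (jb c ^ p)⁻¹ :=
    mul_nonneg (Real.rpow_nonneg (by norm_num) p) (inv_jb_rpow_nonneg c p)
  have Smeas : MeasurableSet {s : ℝ | R ≤ |s|} :=
    measurableSet_le measurable_const continuous_abs.measurable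
  set G1 : ℝ → ℝ≥0∞ := (Icc (-R) R).indicator
    (fun s => ENNReal.ofReal (2 ^ q * (jb c ^ q)⁻¹) * ENNReal.ofReal ((jb s ^ p)⁻¹)) with hG1
  set G2 : ℝ → ℝ≥0∞ := {s : ℝ | R ≤ |s|}.indicator
    (fun s => ENNReal.ofReal ((jb s ^ (p + q))⁻¹)) with hG2
  set G3 : ℝ → ℝ≥0∞ := (Icc (-R) R).indicator
    (fun u => ENNReal.ofReal (2 ^ p * (jb c ^ p)⁻¹) * ENNReal.ofReal ((jb u ^ q)⁻¹)) with hG3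
  have meas1 : Measurable G1 := ((measurable_F p).const_mul _).indicator measurableSet_Icc
  have meas2 : Measurable G2 := (measurable_F (p + q)).indicator Smeas
  have meas3 : Measurable G3 := ((measurable_F q).const_mul _).indicator measurableSet_Icc
  have meas3' : Measurable (fun s : ℝ => G3 (s - c)) :=
    meas3.comp (measurable_id.sub measurable_const)
  have meas4' : Measurable (fun s : ℝ => G2 (s - c)) :=
    meas2.comp (measurable_id.sub measurable_const)
  -- pointwise bound
  have key : ∀ s : ℝ, ENNReal.ofReal ((jb s ^ p)⁻¹ * (jb (s - c) ^ q)⁻¹) ≤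
      G1 s + G2 s + (G3 (s - c) + G2 (s - c)) := by
    intro s
    have habs : |c| ≤ |s| + |s - c| := by
      calc |c| = |s - (s - c)| := by ring_nf
        _ ≤ |s| + |s - c| := abs_sub s (s - c)
    rcases le_total |s| |s - c| with hcase | hcase
    · have hcle : jb c ≤ 2 * jb (s - c) := jb_le_two_mul (by linarith)
      have hjle : jb s ≤ jb (s - c) := jb_mono hcase
      rcases le_total |s| R with hsub | hsub
      · have hmem : s ∈ Icc (-R) R := by
          rw [mem_Icc]
          constructor <;> [linarith [neg_abs_le s]; linarith [le_abs_self s]]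
        have hb : ENNReal.ofReal ((jb s ^ p)⁻¹ * (jb (s - c) ^ q)⁻¹) ≤ G1 s := by
          rw [hG1, indicator_of_mem hmem, ← ENNReal.ofReal_mul hk1,
            mul_comm ((2:ℝ) ^ q * (jb c ^ q)⁻¹) ((jb s ^ p)⁻¹)]
          exact ENNReal.ofReal_le_ofReal (mul_le_mul_of_nonneg_left
            (inv_jb_rpow_peel hq0.le hcle) (inv_jb_rpow_nonneg s p))
        calc ENNReal.ofReal ((jb s ^ p)⁻¹ * (jb (s - c) ^ q)⁻¹) ≤ G1 s := hb
          _ ≤ G1 s + G2 s := le_self_add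
          _ ≤ G1 s + G2 s + (G3 (s - c) + G2 (s - c)) := le_self_add
      · have hmem : s ∈ {s : ℝ | R ≤ |s|} := hsub
        have hb : ENNReal.ofReal ((jb s ^ p)⁻¹ * (jb (s - c) ^ q)⁻¹) ≤ G2 s := by
          rw [hG2, indicator_of_mem hmem, ← inv_jb_rpow_mul]
          exact ENNReal.ofReal_le_ofReal (mul_le_mul_of_nonneg_left
            (inv_jb_rpow_le_of_jb_le hq0.le hjle) (inv_jb_rpow_nonneg s p))
        calc ENNReal.ofReal ((jb s ^ p)⁻¹ * (jb (s - c) ^ q)⁻¹) ≤ G2 s := hb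
          _ ≤ G1 s + G2 s := le_add_self
          _ ≤ G1 s + G2 s + (G3 (s - c) + G2 (s - c)) := le_self_add
    · have hcle : jb c ≤ 2 * jb s := jb_le_two_mul (by linarith)
      have hjle : jb (s - c) ≤ jb s := jb_mono hcase
      have hstep : ENNReal.ofReal ((jb s ^ p)⁻¹ * (jb (s - c) ^ q)⁻¹) ≤
          G3 (s - c) + G2 (s - c) := by
        rcases le_total |s - c| R with hsub | hsub
        · have hmem : s - c ∈ Icc (-R) R := by
            rw [mem_Icc]
            constructor <;> [linarith [neg_abs_le (s - c)]; linarith [le_abs_self (s - c)]]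
          have hb : ENNReal.ofReal ((jb s ^ p)⁻¹ * (jb (s - c) ^ q)⁻¹) ≤ G3 (s - c) := by
            rw [hG3, indicator_of_mem hmem, ← ENNReal.ofReal_mul hk2]
            exact ENNReal.ofReal_le_ofReal (mul_le_mul_of_nonneg_right
              (inv_jb_rpow_peel hp0.le hcle) (inv_jb_rpow_nonneg (s - c) q))
          exact hb.trans le_self_add
        · have hmem : s - c ∈ {u : ℝ | R ≤ |u|} := hsub
          have hb : ENNReal.ofReal ((jb s ^ p)⁻¹ * (jb (s - c) ^ q)⁻¹) ≤ G2 (s - c) := by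
            rw [hG2, indicator_of_mem hmem, ← inv_jb_rpow_mul]
            exact ENNReal.ofReal_le_ofReal (mul_le_mul_of_nonneg_right
              (inv_jb_rpow_le_of_jb_le hp0.le hjle) (inv_jb_rpow_nonneg (s - c) q))
          exact hb.trans le_add_self
      exact hstep.trans le_add_self
  -- integrate the pointwise bound
  have big : ∫⁻ s : ℝ, ENNReal.ofReal ((jb s ^ p)⁻¹ * (jb (s - c) ^ q)⁻¹) ≤
      (∫⁻ s, G1 s) + (∫⁻ s, G2 s) + ((∫⁻ s, G3 (s - c)) + ∫⁻ s, G2 (s - c)) := by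
    calc ∫⁻ s : ℝ, ENNReal.ofReal ((jb s ^ p)⁻¹ * (jb (s - c) ^ q)⁻¹)
        ≤ ∫⁻ s, (G1 s + G2 s + (G3 (s - c) + G2 (s - c))) := lintegral_mono key
      _ = (∫⁻ s, G1 s + G2 s) + ∫⁻ s, (G3 (s - c) + G2 (s - c)) :=
          lintegral_add_left (meas1.add meas2) _
      _ = (∫⁻ s, G1 s) + (∫⁻ s, G2 s) + ((∫⁻ s, G3 (s - c)) + ∫⁻ s, G2 (s - c)) := by
          rw [lintegral_add_left meas1, lintegral_add_left meas3']
  -- translation invariance for G3, G4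
  have tr3 : ∫⁻ s : ℝ, G3 (s - c) = ∫⁻ u, G3 u := lintegral_sub_right_eq_self G3 c
  have tr4 : ∫⁻ s : ℝ, G2 (s - c) = ∫⁻ u, G2 u := lintegral_sub_right_eq_self G2 c
  -- estimates for each piece
  have e1 : ∫⁻ s, G1 s ≤ ENNReal.ofReal ((2 ^ q * C₁) * jb c ^ (1 - (p + q))) := by
    rw [hG1, lintegral_indicator measurableSet_Icc,
      lintegral_const_mul' _ _ ENNReal.ofReal_ne_top]
    calc ENNReal.ofReal (2 ^ q * (jb c ^ q)⁻¹) * ∫⁻ s in Icc (-R) R, ENNReal.ofReal ((jb s ^ p)⁻¹)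
        ≤ ENNReal.ofReal (2 ^ q * (jb c ^ q)⁻¹) * ENNReal.ofReal (C₁ * jb R ^ (1 - p)) :=
          mul_le_mul_right (hnear₁ R hR0) _
      _ = ENNReal.ofReal ((2 ^ q * (jb c ^ q)⁻¹) * (C₁ * jb c ^ (1 - p))) := by
          rw [← ENNReal.ofReal_mul hk1, hjbR]
      _ = ENNReal.ofReal ((2 ^ q * C₁) * jb c ^ (1 - (p + q))) := by
          congr 1
          rw [show jb c ^ ((1:ℝ) - p) = jb c * (jb c ^ p)⁻¹ by
                rw [jb_rpow_sub, Real.rpow_one],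
              show jb c ^ ((1:ℝ) - (p + q)) = jb c * ((jb c ^ p)⁻¹ * (jb c ^ q)⁻¹) by
                rw [jb_rpow_sub, Real.rpow_one, inv_jb_rpow_mul]]
          ring
  have e3 : ∫⁻ u, G3 u ≤ ENNReal.ofReal ((2 ^ p * C₂) * jb c ^ (1 - (p + q))) := by
    rw [hG3, lintegral_indicator measurableSet_Icc,
      lintegral_const_mul' _ _ ENNReal.ofReal_ne_top]
    calc ENNReal.ofReal (2 ^ p * (jb c ^ p)⁻¹) * ∫⁻ u in Icc (-R) R, ENNReal.ofReal ((jb u ^ q)⁻¹)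
        ≤ ENNReal.ofReal (2 ^ p * (jb c ^ p)⁻¹) * ENNReal.ofReal (C₂ * jb R ^ (1 - q)) :=
          mul_le_mul_right (hnear₂ R hR0) _
      _ = ENNReal.ofReal ((2 ^ p * (jb c ^ p)⁻¹) * (C₂ * jb c ^ (1 - q))) := by
          rw [← ENNReal.ofReal_mul hk2, hjbR]
      _ = ENNReal.ofReal ((2 ^ p * C₂) * jb c ^ (1 - (p + q))) := by
          congr 1
          rw [show jb c ^ ((1:ℝ) - q) = jb c * (jb c ^ q)⁻¹ by
                rw [jb_rpow_sub, Real.rpow_one],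
              show jb c ^ ((1:ℝ) - (p + q)) = jb c * ((jb c ^ p)⁻¹ * (jb c ^ q)⁻¹) by
                rw [jb_rpow_sub, Real.rpow_one, inv_jb_rpow_mul]]
          ring
  have e2 : ∫⁻ s, G2 s ≤ ENNReal.ofReal (C₃ * jb c ^ (1 - (p + q))) := by
    rw [hG2, lintegral_indicator Smeas]
    have := htail R hR0
    rwa [hjbR] at this
  refine big.trans ?_
  rw [tr3, tr4]
  calc (∫⁻ s, G1 s) + (∫⁻ s, G2 s) + ((∫⁻ u, G3 u) + ∫⁻ u, G2 u)
      ≤ ENNReal.ofReal ((2 ^ q * C₁) * jb c ^ (1 - (p + q))) +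
        ENNReal.ofReal (C₃ * jb c ^ (1 - (p + q))) +
        (ENNReal.ofReal ((2 ^ p * C₂) * jb c ^ (1 - (p + q))) +
         ENNReal.ofReal (C₃ * jb c ^ (1 - (p + q)))) :=
        add_le_add (add_le_add e1 e2) (add_le_add e3 e2)
    _ ≤ ENNReal.ofReal ((2 ^ q * C₁ + 2 ^ p * C₂ + C₃ + C₃) * jb c ^ (1 - (p + q))) := by
        have hx : (0:ℝ) ≤ jb c ^ (1 - (p + q)) := (jb_rpow_pos c _).le
        have h2q : (0:ℝ) ≤ 2 ^ q * C₁ := mul_nonneg (Real.rpow_nonneg (by norm_num) q) hC₁.le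
        have h2p : (0:ℝ) ≤ 2 ^ p * C₂ := mul_nonneg (Real.rpow_nonneg (by norm_num) p) hC₂.le
        rw [← ENNReal.ofReal_add (mul_nonneg h2q hx) (mul_nonneg hC₃.le hx),
          ← ENNReal.ofReal_add (mul_nonneg h2p hx) (mul_nonneg hC₃.le hx),
          ← ENNReal.ofReal_add (by nlinarith) (by nlinarith)]
        exact ENNReal.ofReal_le_ofReal (le_of_eq (by ring))

end Chunk5
section Chunk6
open JBAux Set

lemma super_bound {a b : ℝ} (ha : 0 < a) (hab : a ≤ b) (hb : 1 < b) :
    ∃ C : ℝ, 0 < C ∧ ∀ c : ℝ,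
      ∫⁻ s : ℝ, ENNReal.ofReal ((jb s ^ a)⁻¹ * (jb (s - c) ^ b)⁻¹) ≤
        ENNReal.ofReal (C * jb c ^ (-a)) := by
  set A := ∫ x : ℝ, (jb x ^ b)⁻¹ with hA
  have hA0 : 0 ≤ A := integral_nonneg fun x => inv_jb_rpow_nonneg x b
  have h2a : (0:ℝ) < 2 ^ a := Real.rpow_pos_of_pos (by norm_num) a
  have hCpos : 0 < 2 ^ a * (A + A + 1) := mul_pos h2a (by linarith)
  refine ⟨2 ^ a * (A + A + 1), hCpos, fun c => ?_⟩
  have hk : (0:ℝ) ≤ 2 ^ a * (jb c ^ a)⁻¹ := mul_nonneg h2a.le (inv_jb_rpow_nonneg c a)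
  have key : ∀ s : ℝ, ENNReal.ofReal ((jb s ^ a)⁻¹ * (jb (s - c) ^ b)⁻¹) ≤
      ENNReal.ofReal (2 ^ a * (jb c ^ a)⁻¹) *
        (ENNReal.ofReal ((jb s ^ b)⁻¹) + ENNReal.ofReal ((jb (s - c) ^ b)⁻¹)) := by
    intro s
    have habs : |c| ≤ |s| + |s - c| := by
      calc |c| = |s - (s - c)| := by ring_nf
        _ ≤ |s| + |s - c| := abs_sub s (s - c)
    rcases le_total |s| |s - c| with hcase | hcase
    · have hcle : jb c ≤ 2 * jb (s - c) := jb_le_two_mul (by linarith)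
      have hjle : jb s ≤ jb (s - c) := jb_mono hcase
      have hre : (jb s ^ a)⁻¹ * (jb (s - c) ^ b)⁻¹ ≤
          (2 ^ a * (jb c ^ a)⁻¹) * (jb s ^ b)⁻¹ := by
        have hsplit : (jb (s - c) ^ b)⁻¹ = (jb (s - c) ^ a)⁻¹ * (jb (s - c) ^ (b - a))⁻¹ := by
          rw [inv_jb_rpow_mul, show a + (b - a) = b by ring]
        have h1 : (jb (s - c) ^ a)⁻¹ ≤ 2 ^ a * (jb c ^ a)⁻¹ := inv_jb_rpow_peel ha.le hcle
        have h2 : (jb (s - c) ^ (b - a))⁻¹ ≤ (jb s ^ (b - a))⁻¹ :=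
          inv_jb_rpow_le_of_jb_le (by linarith) hjle
        calc (jb s ^ a)⁻¹ * (jb (s - c) ^ b)⁻¹
            = (jb s ^ a)⁻¹ * ((jb (s - c) ^ a)⁻¹ * (jb (s - c) ^ (b - a))⁻¹) := by rw [hsplit]
          _ ≤ (jb s ^ a)⁻¹ * ((2 ^ a * (jb c ^ a)⁻¹) * (jb s ^ (b - a))⁻¹) := by
              refine mul_le_mul_of_nonneg_left ?_ (inv_jb_rpow_nonneg s a)
              exact mul_le_mul h1 h2 (inv_jb_rpow_nonneg _ _) hk
          _ = (2 ^ a * (jb c ^ a)⁻¹) * ((jb s ^ a)⁻¹ * (jb s ^ (b - a))⁻¹) := by ring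
          _ = (2 ^ a * (jb c ^ a)⁻¹) * (jb s ^ b)⁻¹ := by
              rw [inv_jb_rpow_mul, show a + (b - a) = b by ring]
      calc ENNReal.ofReal ((jb s ^ a)⁻¹ * (jb (s - c) ^ b)⁻¹)
          ≤ ENNReal.ofReal ((2 ^ a * (jb c ^ a)⁻¹) * (jb s ^ b)⁻¹) :=
            ENNReal.ofReal_le_ofReal hre
        _ = ENNReal.ofReal (2 ^ a * (jb c ^ a)⁻¹) * ENNReal.ofReal ((jb s ^ b)⁻¹) :=
            ENNReal.ofReal_mul hk
        _ ≤ _ := mul_le_mul_right le_self_add _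
    · have hcle : jb c ≤ 2 * jb s := jb_le_two_mul (by linarith)
      have hre : (jb s ^ a)⁻¹ * (jb (s - c) ^ b)⁻¹ ≤
          (2 ^ a * (jb c ^ a)⁻¹) * (jb (s - c) ^ b)⁻¹ :=
        mul_le_mul_of_nonneg_right (inv_jb_rpow_peel ha.le hcle) (inv_jb_rpow_nonneg _ b)
      calc ENNReal.ofReal ((jb s ^ a)⁻¹ * (jb (s - c) ^ b)⁻¹)
          ≤ ENNReal.ofReal ((2 ^ a * (jb c ^ a)⁻¹) * (jb (s - c) ^ b)⁻¹) :=
            ENNReal.ofReal_le_ofReal hre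
        _ = ENNReal.ofReal (2 ^ a * (jb c ^ a)⁻¹) * ENNReal.ofReal ((jb (s - c) ^ b)⁻¹) :=
            ENNReal.ofReal_mul hk
        _ ≤ _ := mul_le_mul_right le_add_self _
  calc ∫⁻ s : ℝ, ENNReal.ofReal ((jb s ^ a)⁻¹ * (jb (s - c) ^ b)⁻¹)
      ≤ ∫⁻ s : ℝ, ENNReal.ofReal (2 ^ a * (jb c ^ a)⁻¹) *
          (ENNReal.ofReal ((jb s ^ b)⁻¹) + ENNReal.ofReal ((jb (s - c) ^ b)⁻¹)) :=
        lintegral_mono key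
    _ = ENNReal.ofReal (2 ^ a * (jb c ^ a)⁻¹) *
        ∫⁻ s : ℝ, (ENNReal.ofReal ((jb s ^ b)⁻¹) + ENNReal.ofReal ((jb (s - c) ^ b)⁻¹)) :=
        lintegral_const_mul' _ _ ENNReal.ofReal_ne_top
    _ = ENNReal.ofReal (2 ^ a * (jb c ^ a)⁻¹) *
        ((∫⁻ s : ℝ, ENNReal.ofReal ((jb s ^ b)⁻¹)) +
          ∫⁻ s : ℝ, ENNReal.ofReal ((jb (s - c) ^ b)⁻¹)) := by
        rw [lintegral_add_left (measurable_F b)]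
    _ = ENNReal.ofReal (2 ^ a * (jb c ^ a)⁻¹) * (ENNReal.ofReal A + ENNReal.ofReal A) := by
        rw [lintegral_sub_right_eq_self (fun u => ENNReal.ofReal ((jb u ^ b)⁻¹)) c,
          ← lintegral_jb_rpow_eq hb]
    _ ≤ ENNReal.ofReal (2 ^ a * (A + A + 1) * jb c ^ (-a)) := by
        rw [← ENNReal.ofReal_add hA0 hA0, ← ENNReal.ofReal_mul hk]
        refine ENNReal.ofReal_le_ofReal ?_
        rw [Real.rpow_neg (jb_nonneg c)]
        have hj : (0:ℝ) ≤ (jb c ^ a)⁻¹ := inv_jb_rpow_nonneg c a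
        nlinarith [mul_nonneg h2a.le hj]

end Chunk6

open JBAux Set in
/-- Convolution-type integral estimate: for `0 < α ≤ β` with `α + β > 1` and `ε > 0`
there is `C > 0` such that for all `a b : ℝ`,
`∫ dt / (⟨t−a⟩^α ⟨t−b⟩^β) ≤ C ⟨a−b⟩^{−γ}`, where `γ = α+β−1` if `β < 1`,
`γ = α − ε` if `β = 1`, and `γ = α` if `β > 1`. -/
theorem bracket_convolution_estimate (α β ε : ℝ) (hα : 0 < α) (hαβ : α ≤ β)
    (hsum : 1 < α + β) (hε : 0 < ε) :
    ∃ C : ℝ, 0 < C ∧ ∀ a b : ℝ,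
      ∫⁻ t : ℝ, ENNReal.ofReal ((jb (t - a) ^ α * jb (t - b) ^ β)⁻¹) ≤
        ENNReal.ofReal (C * jb (a - b) ^
          (-(if β < 1 then α + β - 1 else if β = 1 then α - ε else α))) := by
  have hβ0 : 0 < β := lt_of_lt_of_le hα hαβ
  have reduce : ∀ (C γ : ℝ),
      (∀ c : ℝ, ∫⁻ s : ℝ, ENNReal.ofReal ((jb s ^ α)⁻¹ * (jb (s - c) ^ β)⁻¹) ≤
        ENNReal.ofReal (C * jb c ^ (-γ))) →
      ∀ a b : ℝ, ∫⁻ t : ℝ, ENNReal.ofReal ((jb (t - a) ^ α * jb (t - b) ^ β)⁻¹) ≤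
        ENNReal.ofReal (C * jb (a - b) ^ (-γ)) := by
    intro C γ h a b
    have e1 : ∀ t : ℝ, ENNReal.ofReal ((jb (t - a) ^ α * jb (t - b) ^ β)⁻¹) =
        (fun s => ENNReal.ofReal ((jb s ^ α)⁻¹ * (jb (s - (b - a)) ^ β)⁻¹)) (t - a) := by
      intro t
      simp only
      rw [mul_inv, show t - a - (b - a) = t - b by ring]
    calc ∫⁻ t : ℝ, ENNReal.ofReal ((jb (t - a) ^ α * jb (t - b) ^ β)⁻¹)
        = ∫⁻ t : ℝ, (fun s => ENNReal.ofReal ((jb s ^ α)⁻¹ * (jb (s - (b - a)) ^ β)⁻¹)) (t - a) :=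
          lintegral_congr e1
      _ = ∫⁻ s : ℝ, ENNReal.ofReal ((jb s ^ α)⁻¹ * (jb (s - (b - a)) ^ β)⁻¹) :=
          lintegral_sub_right_eq_self (fun s => ENNReal.ofReal ((jb s ^ α)⁻¹ * (jb (s - (b - a)) ^ β)⁻¹)) a
      _ ≤ ENNReal.ofReal (C * jb (b - a) ^ (-γ)) := h (b - a)
      _ = ENNReal.ofReal (C * jb (a - b) ^ (-γ)) := by
          rw [show b - a = -(a - b) by ring, jb_neg]
  rcases lt_trichotomy β 1 with hβ1 | hβ1 | hβ1
  · rw [if_pos hβ1]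
    have hα1 : α < 1 := lt_of_le_of_lt hαβ hβ1
    obtain ⟨C, hC, hbound⟩ := crit_bound hα hα1 hβ0 hβ1 hsum
    refine ⟨C, hC, fun a b => reduce C (α + β - 1) (fun c => ?_) a b⟩
    have := hbound c
    rwa [show 1 - (α + β) = -(α + β - 1) by ring] at this
  · subst hβ1
    rw [if_neg (lt_irrefl (1:ℝ)), if_pos rfl]
    set ε₀ := min ε α / 3 with hε₀def
    have hminpos : 0 < min ε α := lt_min hε hα
    have hε₀ : 0 < ε₀ := by positivity
    have hε₀ε : 3 * ε₀ ≤ ε := by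
      have := min_le_left ε α
      rw [hε₀def]; linarith
    have hε₀α : 3 * ε₀ ≤ α := by
      have := min_le_right ε α
      rw [hε₀def]; linarith
    have hp0 : 0 < α - ε₀ := by linarith
    have hp1 : α - ε₀ < 1 := by linarith
    have hq0 : 0 < 1 - ε₀ := by linarith
    have hq1 : 1 - ε₀ < 1 := by linarith
    have hpq : 1 < (α - ε₀) + (1 - ε₀) := by linarith
    obtain ⟨C, hC, hbound⟩ := crit_bound hp0 hp1 hq0 hq1 hpq
    refine ⟨C, hC, fun a b => reduce C (α - ε) (fun c => ?_) a b⟩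
    calc ∫⁻ s : ℝ, ENNReal.ofReal ((jb s ^ α)⁻¹ * (jb (s - c) ^ (1:ℝ))⁻¹)
        ≤ ∫⁻ s : ℝ, ENNReal.ofReal ((jb s ^ (α - ε₀))⁻¹ * (jb (s - c) ^ (1 - ε₀))⁻¹) := by
          refine lintegral_mono fun s => ENNReal.ofReal_le_ofReal ?_
          exact mul_le_mul (inv_jb_rpow_anti (by linarith))
            (inv_jb_rpow_anti (by linarith)) (inv_jb_rpow_nonneg _ _)
            (inv_jb_rpow_nonneg _ _)
      _ ≤ ENNReal.ofReal (C * jb c ^ (1 - ((α - ε₀) + (1 - ε₀)))) := hbound c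
      _ ≤ ENNReal.ofReal (C * jb c ^ (-(α - ε))) := by
          refine ENNReal.ofReal_le_ofReal (mul_le_mul_of_nonneg_left ?_ hC.le)
          exact Real.rpow_le_rpow_of_exponent_le (one_le_jb c) (by linarith)
  · have h1 : ¬ (β < 1) := by linarith
    have h2 : ¬ (β = 1) := by linarith
    rw [if_neg h1, if_neg h2]
    obtain ⟨C, hC, hbound⟩ := super_bound hα hαβ hβ1
    exact ⟨C, hC, fun a b => reduce C α hbound a b⟩
end

section
/- Let b > 3/8 be a real number. There exists a constant C > 0 such that for every real number τ and every natural number m, Σ_{k=0}^{m} ⟨τ − k(k+1) − (m−k)(m−k+1)⟩^{1−4b} ≤ C. -/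
/-!
Writing `x = k - m/2` and `σ = τ - m²/2 - m`, the modulation is `σ - 2x²`. With `r = √(σ/2)`
one has `(|x| - r)² ≤ |σ/2 - x²|`, so `⟨σ - 2x²⟩^{-p} ≲ ⟨x - r⟩^{-2p} + ⟨x + r⟩^{-2p}` for
`p = 4b - 1` (for `σ ≤ 0` this holds with `r = 0`, which is also the value of `√(σ/2)` in Mathlib).
Since `2p > 1`, both terms are summable over the integers `k`, uniformly in the shift.
-/

lemma jb_pos (x : ℝ) : 0 < jb x := Real.sqrt_pos.2 (by positivity)

lemma jb_sq (x : ℝ) : jb x ^ 2 = 1 + x ^ 2 := Real.sq_sqrt (by positivity)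

lemma jb_neg (x : ℝ) : jb (-x) = jb x := by simp [jb]

lemma abs_le_jb (x : ℝ) : |x| ≤ jb x := Real.abs_le_sqrt (by linarith)

lemma jb_le_jb {x y : ℝ} (h : |x| ≤ |y|) : jb x ≤ jb y :=
  Real.sqrt_le_sqrt (by linarith [sq_le_sq.2 h])

lemma jb_le_two_mul_jb_of_abs_sub_le {x y : ℝ} (h : |x - y| ≤ 1 / 2) : jb x ≤ 2 * jb y := by
  obtain ⟨h₁, h₂⟩ := abs_le.1 h
  rw [jb, jb, show (2 : ℝ) = √4 by norm_num, ← Real.sqrt_mul (by norm_num)]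
  exact Real.sqrt_le_sqrt (by nlinarith [sq_nonneg (x - 2 * y)])

lemma jb_sq_le_sqrt_two_mul_jb_sq (x : ℝ) : jb x ^ 2 ≤ √2 * jb (x ^ 2) := by
  rw [jb_sq, jb, ← Real.sqrt_mul (by norm_num)]
  exact Real.le_sqrt_of_sq_le (by nlinarith [sq_nonneg (1 - x ^ 2)])

lemma rpow_neg_le_of_le_mul {a b c q : ℝ} (ha : 0 < a) (hc : 0 < c) (hq : 0 ≤ q)
    (h : a ≤ c * b) : b ^ (-q) ≤ c ^ q * a ^ (-q) := by
  have hb : 0 < b := pos_of_mul_pos_right (ha.trans_le h) hc.le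
  calc b ^ (-q) = c ^ q * (c * b) ^ (-q) := by
        rw [Real.mul_rpow hc.le hb.le, ← mul_assoc, ← Real.rpow_add hc, add_neg_cancel,
          Real.rpow_zero, one_mul]
    _ ≤ c ^ q * a ^ (-q) := by gcongr ?_ * ?_; exact Real.rpow_le_rpow_of_nonpos ha h (by linarith)

lemma summable_jb_intCast_rpow_neg {q : ℝ} (hq : 1 < q) :
    Summable fun n : ℤ => jb n ^ (-q) := by
  refine Summable.of_norm_bounded_eventually (Real.summable_abs_int_rpow hq) ?_
  filter_upwards [Filter.eventually_cofinite_ne 0] with n hn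
  rw [Real.norm_of_nonneg (Real.rpow_nonneg (jb_pos _).le _)]
  exact Real.rpow_le_rpow_of_nonpos (abs_pos.2 (Int.cast_ne_zero.2 hn)) (abs_le_jb _)
    (by linarith)

lemma exists_sum_jb_natCast_sub_rpow_neg_le {q : ℝ} (hq : 1 < q) :
    ∃ T : ℝ, ∀ (d : ℝ) (s : Finset ℕ), ∑ k ∈ s, jb (k - d) ^ (-q) ≤ T := by
  set f : ℤ → ℝ := fun n => jb n ^ (-q)
  refine ⟨2 ^ q * ∑' n, f n, fun d s => ?_⟩
  let shift : ℕ ↪ ℤ := ⟨fun k => k - round d, fun a b h => by simpa using h⟩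
  have hterm (k : ℕ) : jb (k - d) ^ (-q) ≤ 2 ^ q * f (shift k) := by
    refine rpow_neg_le_of_le_mul (jb_pos _) two_pos (by linarith)
      (jb_le_two_mul_jb_of_abs_sub_le ?_)
    have hdist : ((shift k : ℤ) : ℝ) - (k - d) = d - round d := by
      change (((k : ℤ) - round d : ℤ) : ℝ) - (k - d) = _
      push_cast; ring
    rw [hdist]
    exact abs_sub_round d
  calc ∑ k ∈ s, jb (k - d) ^ (-q) ≤ ∑ k ∈ s, 2 ^ q * f (shift k) :=
        Finset.sum_le_sum fun k _ => hterm k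
    _ = 2 ^ q * ∑ n ∈ s.map shift, f n := by rw [Finset.sum_map, Finset.mul_sum]
    _ ≤ 2 ^ q * ∑' n, f n := by
        gcongr
        exact (summable_jb_intCast_rpow_neg hq).sum_le_tsum _
          fun n _ => Real.rpow_nonneg (jb_pos _).le _

lemma sq_sub_le_abs_sq_sub_sq {a r : ℝ} (ha : 0 ≤ a) (hr : 0 ≤ r) :
    (a - r) ^ 2 ≤ |a ^ 2 - r ^ 2| := by
  rcases le_total a r with h | h
  · rw [abs_of_nonpos (by nlinarith)]; nlinarith
  · rw [abs_of_nonneg (by nlinarith)]; nlinarith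

lemma sq_abs_sub_sqrt_le (c x : ℝ) : (|x| - √c) ^ 2 ≤ |x ^ 2 - c| := by
  rcases le_or_gt c 0 with hc | hc
  · rw [Real.sqrt_eq_zero_of_nonpos hc, sub_zero, sq_abs, abs_of_nonneg (by nlinarith)]
    linarith
  · simpa [Real.sq_sqrt hc.le] using sq_sub_le_abs_sq_sub_sq (abs_nonneg x) (Real.sqrt_nonneg c)

lemma jb_sub_two_mul_sq_rpow_neg_le {p : ℝ} (hp : 0 ≤ p) (σ x : ℝ) :
    jb (σ - 2 * x ^ 2) ^ (-p) ≤
      √2 ^ p * (jb (x - √(σ / 2)) ^ (-(2 * p)) + jb (x + √(σ / 2)) ^ (-(2 * p))) := by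
  set u := |x| - √(σ / 2)
  have hu : jb u ^ 2 ≤ √2 * jb (σ - 2 * x ^ 2) := by
    refine (jb_sq_le_sqrt_two_mul_jb_sq u).trans
      (mul_le_mul_of_nonneg_left (jb_le_jb ?_) (by positivity))
    have : |x ^ 2 - σ / 2| ≤ |σ - 2 * x ^ 2| := by
      rw [abs_sub_comm, show σ - 2 * x ^ 2 = 2 * (σ / 2 - x ^ 2) by ring, abs_mul, abs_two]
      linarith [abs_nonneg (σ / 2 - x ^ 2)]
    rw [abs_sq]
    exact (sq_abs_sub_sqrt_le _ x).trans this
  have hju : jb u ^ (-(2 * p)) ≤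
      jb (x - √(σ / 2)) ^ (-(2 * p)) + jb (x + √(σ / 2)) ^ (-(2 * p)) := by
    have hnonneg (y : ℝ) : 0 ≤ jb y ^ (-(2 * p)) := Real.rpow_nonneg (jb_pos y).le _
    rcases abs_cases x with ⟨hx, -⟩ | ⟨hx, -⟩
    · simp only [u, hx]; linarith [hnonneg (x + √(σ / 2))]
    · rw [show u = -(x + √(σ / 2)) by simp only [u, hx]; ring, jb_neg]
      linarith [hnonneg (x - √(σ / 2))]
  calc jb (σ - 2 * x ^ 2) ^ (-p) ≤ √2 ^ p * (jb u ^ 2) ^ (-p) :=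
        rpow_neg_le_of_le_mul (pow_pos (jb_pos u) 2) (by positivity) hp hu
    _ = √2 ^ p * jb u ^ (-(2 * p)) := by
        rw [← Real.rpow_natCast, ← Real.rpow_mul (jb_pos u).le]; push_cast; ring_nf
    _ ≤ _ := by gcongr

/-- The key counting estimate for the bilinear Strichartz estimate on `S²`: for `b > 3/8`
the sums `Σ_{k=0}^{m} ⟨τ − k(k+1) − (m−k)(m−k+1)⟩^{1−4b}` are bounded uniformly in
`τ ∈ ℝ` and `m ∈ ℕ`. -/
theorem sum_bracket_modulation_bound (b : ℝ) (hb : 3 / 8 < b) :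
    ∃ C : ℝ, 0 < C ∧ ∀ (τ : ℝ) (m : ℕ),
      ∑ k ∈ Finset.range (m + 1),
          jb (τ - (k : ℝ) * ((k : ℝ) + 1) - ((m - k : ℕ) : ℝ) * (((m - k : ℕ) : ℝ) + 1)) ^
            (1 - 4 * b) ≤ C := by
  set p := 4 * b - 1
  obtain ⟨T, hT⟩ := exists_sum_jb_natCast_sub_rpow_neg_le (q := 2 * p) (by linarith)
  have hT₀ : 0 ≤ T := by simpa using hT 0 ∅
  refine ⟨√2 ^ p * (T + T) + 1, by positivity, fun τ m => ?_⟩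
  set σ := τ - (m : ℝ) ^ 2 / 2 - m
  have hmod (k : ℕ) (hk : k ∈ Finset.range (m + 1)) :
      τ - (k : ℝ) * ((k : ℝ) + 1) - ((m - k : ℕ) : ℝ) * (((m - k : ℕ) : ℝ) + 1) =
        σ - 2 * ((k : ℝ) - m / 2) ^ 2 := by
    rw [Nat.cast_sub (Nat.lt_succ_iff.1 (Finset.mem_range.1 hk))]; ring
  calc _ = ∑ k ∈ Finset.range (m + 1), jb (σ - 2 * ((k : ℝ) - m / 2) ^ 2) ^ (-p) := by
        refine Finset.sum_congr rfl fun k hk => ?_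
        rw [hmod k hk, show 1 - 4 * b = -p by ring]
    _ ≤ ∑ k ∈ Finset.range (m + 1), √2 ^ p *
          (jb (k - m / 2 - √(σ / 2)) ^ (-(2 * p)) + jb (k - m / 2 + √(σ / 2)) ^ (-(2 * p))) :=
        Finset.sum_le_sum fun k _ => jb_sub_two_mul_sq_rpow_neg_le (by linarith) σ _
    _ ≤ √2 ^ p * (T + T) := by
        simp only [sub_sub, sub_add, ← Finset.mul_sum, Finset.sum_add_distrib]
        gcongr <;> apply hT
    _ ≤ √2 ^ p * (T + T) + 1 := by linarith
end

section
/- For every real number p with 1 ≤ p < ∞ there exist constants c, C > 0 (depending on p) such that for every natural number k ≥ 1, c · (1+k)^{−1/(2p)} ≤ ( ∫_{S²} |x₁ + i x₂|^{kp} dσ(x) )^{1/p} ≤ C · (1+k)^{−1/(2p)}. -/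
/-!
Write `J(a) = ∫_{S²} |x₁ + i x₂|^a dσ` and integrate `|x₁ + i x₂|^a e^{-|x|²}` over `ℝ³` in two
ways. In polar coordinates the integrand is homogeneous of degree `a` in the angular variable, so
the integral is `J(a) Γ((a + 3)/2) / 2`; splitting `ℝ³ = ℂ × ℝ` it is `π^{3/2} Γ((a + 2)/2)`. Hence
`J(a) Γ(x + 1/2) = 2π^{3/2} Γ(x)` with `x = (a + 2)/2`, and log-convexity of `Γ` squeezes
`Γ(x + 1/2) / Γ(x)` between `x / √(x + 1/2)` and `√x`, so `J(a) ≍ (a + 2)^{-1/2}`. Take `a = kp`.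
-/

open MeasureTheory Metric

/-- The standard surface measure on the unit sphere `S² ⊆ ℝ³`. -/
noncomputable def sphereMeasure : Measure (sphere (0 : EuclideanSpace ℝ (Fin 3)) 1) :=
  (volume : Measure (EuclideanSpace ℝ (Fin 3))).toSphere

open Real Set Module

namespace Real

theorem Gamma_add_half_le_sqrt_mul_Gamma {x : ℝ} (hx : 0 < x) :
    Gamma (x + 1 / 2) ≤ √x * Gamma x := by
  have h := Gamma_mul_add_mul_le_rpow_Gamma_mul_rpow_Gamma hx (by linarith : 0 < x + 1)
    one_half_pos one_half_pos (add_halves 1)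
  rw [Gamma_add_one hx.ne', mul_rpow hx.le (Gamma_pos_of_pos hx).le, ← sqrt_eq_rpow,
    ← sqrt_eq_rpow] at h
  calc Gamma (x + 1 / 2) = Gamma (1 / 2 * x + 1 / 2 * (x + 1)) := by ring_nf
    _ ≤ √(Gamma x) * (√x * √(Gamma x)) := h
    _ = √x * Gamma x := by
      rw [mul_left_comm, mul_self_sqrt (Gamma_pos_of_pos hx).le]

theorem mul_Gamma_le_sqrt_mul_Gamma_add_half {x : ℝ} (hx : 0 < x) :
    x * Gamma x ≤ √(x + 1 / 2) * Gamma (x + 1 / 2) := by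
  have hx' : 0 < x + 1 / 2 := by linarith
  have h := Gamma_mul_add_mul_le_rpow_Gamma_mul_rpow_Gamma hx' (by linarith : 0 < x + 1 / 2 + 1)
    one_half_pos one_half_pos (add_halves 1)
  rw [Gamma_add_one hx'.ne', mul_rpow hx'.le (Gamma_pos_of_pos hx').le, ← sqrt_eq_rpow,
    ← sqrt_eq_rpow] at h
  calc x * Gamma x = Gamma (1 / 2 * (x + 1 / 2) + 1 / 2 * (x + 1 / 2 + 1)) := by
        rw [← Gamma_add_one hx.ne']; ring_nf
    _ ≤ √(Gamma (x + 1 / 2)) * (√(x + 1 / 2) * √(Gamma (x + 1 / 2))) := h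
    _ = √(x + 1 / 2) * Gamma (x + 1 / 2) := by
      rw [mul_left_comm, mul_self_sqrt (Gamma_pos_of_pos hx').le]

theorem div_sqrt_rpow_one_div {c t : ℝ} (hc : 0 ≤ c) (ht : 0 ≤ t) (p : ℝ) :
    (c / √t) ^ (1 / p) = c ^ (1 / p) * t ^ (-(1 / (2 * p))) := by
  rw [div_rpow hc (sqrt_nonneg t), sqrt_eq_rpow, ← rpow_mul ht, rpow_neg ht, div_eq_mul_inv]
  ring_nf

end Real

namespace MeasureTheory

theorem integral_volumeIoiPow (n : ℕ) (g : ℝ → ℝ) :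
    ∫ r : Ioi (0 : ℝ), g r ∂Measure.volumeIoiPow n = ∫ r in Ioi 0, r ^ n * g r := by
  simp only [Measure.volumeIoiPow, ENNReal.ofReal]
  rw [integral_withDensity_eq_integral_smul (measurable_subtype_coe.pow_const _).real_toNNReal,
    integral_subtype_comap measurableSet_Ioi fun r ↦ Real.toNNReal (r ^ n) • g r]
  refine setIntegral_congr_fun measurableSet_Ioi fun r hr ↦ ?_
  rw [NNReal.smul_def, Real.coe_toNNReal _ (pow_nonneg (le_of_lt hr) _), smul_eq_mul]

variable {E : Type*} [NormedAddCommGroup E] [NormedSpace ℝ E] [FiniteDimensional ℝ E]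
  [MeasurableSpace E] [BorelSpace E] [Nontrivial E] (μ : Measure E) [μ.IsAddHaarMeasure]

theorem integral_mul_fun_norm_of_homogeneous {f : E → ℝ} {a : ℝ}
    (hf : ∀ c : ℝ, 0 < c → ∀ x, f (c • x) = c ^ a * f x) (g : ℝ → ℝ) :
    ∫ x, f x * g ‖x‖ ∂μ =
      (∫ u, f u ∂μ.toSphere) * ∫ r in Ioi (0 : ℝ), r ^ (finrank ℝ E - 1) * (r ^ a * g r) :=
  calc ∫ x, f x * g ‖x‖ ∂μ = ∫ x : ({0}ᶜ : Set E), f x * g ‖(x : E)‖ ∂μ.comap (↑) := by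
        rw [integral_subtype_comap (measurableSet_singleton _).compl fun x ↦ f x * g ‖x‖,
          restrict_compl_singleton]
    _ = ∫ y, f y.1 * ((y.2 : ℝ) ^ a * g y.2)
          ∂μ.toSphere.prod (Measure.volumeIoiPow (finrank ℝ E - 1)) := by
        rw [← μ.measurePreserving_homeomorphUnitSphereProd.integral_comp
          (Homeomorph.measurableEmbedding _)]
        refine integral_congr_ae (.of_forall fun x ↦ ?_)
        have hx : 0 < ‖(x : E)‖ := norm_pos_iff.mpr x.2
        simp only [homeomorphUnitSphereProd_apply_fst_coe, homeomorphUnitSphereProd_apply_snd_coe]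
        have hfx : f x = ‖(x : E)‖ ^ a * f (‖(x : E)‖⁻¹ • (x : E)) := by
          rw [← hf _ hx, smul_inv_smul₀ hx.ne']
        rw [hfx]
        ring
    _ = _ := by
        rw [integral_prod_mul (fun u : sphere (0 : E) 1 ↦ f u)
          (fun r : Ioi (0 : ℝ) ↦ (r : ℝ) ^ a * g r), integral_volumeIoiPow _ fun r ↦ r ^ a * g r]

end MeasureTheory

local notation "ℝ³" => EuclideanSpace ℝ (Fin 3)

theorem EuclideanSpace.integral_fin_three_eq_complex_prod (h : ℂ → ℝ) (k : ℝ → ℝ) :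
    ∫ x : ℝ³, h (x 0 + x 1 * Complex.I) * k (x 2) = (∫ z, h z) * ∫ t, k t :=
  calc ∫ x : ℝ³, h (x 0 + x 1 * Complex.I) * k (x 2)
      = ∫ w : Fin 3 → ℝ, h (w 0 + w 1 * Complex.I) * k (w 2) :=
        ((EuclideanSpace.volume_preserving_symm_measurableEquiv_toLp (Fin 3)).symm.integral_comp'
          (fun x : ℝ³ ↦ h (x 0 + x 1 * Complex.I) * k (x 2))).symm
    _ = ∫ p : ℝ × (Fin 2 → ℝ), k p.1 * h (Complex.measurableEquivPi.symm p.2) := by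
        rw [← (volume_preserving_piFinSuccAbove (fun _ : Fin 3 ↦ ℝ) 2).symm.integral_comp']
        refine integral_congr_ae (.of_forall fun p ↦ ?_)
        simp [Fin.insertNth, Fin.succAboveCases, mul_comm]
    _ = (∫ t, k t) * ∫ y, h (Complex.measurableEquivPi.symm y) := by
        rw [Measure.volume_eq_prod, integral_prod_mul (fun t ↦ k t)
          (fun y ↦ h (Complex.measurableEquivPi.symm y))]
    _ = _ := by rw [Complex.volume_preserving_equiv_pi.symm.integral_comp' h, mul_comm]

noncomputable def highestWeightMoment (a : ℝ) : ℝ :=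
  ∫ x : sphere (0 : ℝ³) 1, ‖((x : ℝ³) 0 : ℂ) + Complex.I * (x : ℝ³) 1‖ ^ a ∂sphereMeasure

theorem norm_highestWeight_smul (a c : ℝ) (hc : 0 < c) (x : ℝ³) :
    ‖(((c • x) 0 : ℝ) : ℂ) + Complex.I * (c • x) 1‖ ^ a =
      c ^ a * ‖((x 0 : ℝ) : ℂ) + Complex.I * x 1‖ ^ a := by
  simp only [PiLp.smul_apply, smul_eq_mul, Complex.ofReal_mul]
  rw [← mul_left_comm, ← mul_add, norm_mul, Complex.norm_real, norm_of_nonneg hc.le,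
    mul_rpow hc.le (norm_nonneg _)]

theorem integral_highestWeight_mul_gaussian_eq_moment_mul (a : ℝ) (ha : -3 < a) :
    ∫ x : ℝ³, ‖((x 0 : ℝ) : ℂ) + Complex.I * x 1‖ ^ a * rexp (-‖x‖ ^ 2) =
      highestWeightMoment a * (Gamma ((a + 3) / 2) / 2) := by
  rw [integral_mul_fun_norm_of_homogeneous volume
    (f := fun x : ℝ³ ↦ ‖((x 0 : ℝ) : ℂ) + Complex.I * x 1‖ ^ a) (norm_highestWeight_smul a)
    (fun r ↦ rexp (-r ^ 2)), finrank_euclideanSpace_fin]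
  congr 1
  calc ∫ r in Ioi (0 : ℝ), r ^ (3 - 1) * (r ^ a * rexp (-r ^ 2))
      = ∫ r in Ioi (0 : ℝ), r ^ (a + 2) * rexp (-r ^ (2 : ℝ)) := by
        refine setIntegral_congr_fun measurableSet_Ioi fun r (hr : 0 < r) ↦ ?_
        rw [rpow_two, rpow_add hr, rpow_two, ← mul_assoc, mul_comm (r ^ a)]
    _ = Gamma ((a + 3) / 2) / 2 := by
        rw [integral_rpow_mul_exp_neg_rpow two_pos (by linarith)]
        ring_nf

theorem integral_highestWeight_mul_gaussian (a : ℝ) (ha : -2 < a) :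
    ∫ x : ℝ³, ‖((x 0 : ℝ) : ℂ) + Complex.I * x 1‖ ^ a * rexp (-‖x‖ ^ 2) =
      π * Gamma ((a + 2) / 2) * √π := by
  have hsplit (x : ℝ³) : ‖((x 0 : ℝ) : ℂ) + Complex.I * x 1‖ ^ a * rexp (-‖x‖ ^ 2) =
      (‖(x 0 + x 1 * Complex.I : ℂ)‖ ^ a * rexp (-‖(x 0 + x 1 * Complex.I : ℂ)‖ ^ 2)) *
        rexp (-1 * x 2 ^ 2) := by
    rw [EuclideanSpace.norm_sq_eq, Fin.sum_univ_three, Complex.sq_norm, Complex.normSq_add_mul_I,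
      mul_comm Complex.I]
    simp only [norm_eq_abs, sq_abs]
    rw [mul_assoc, ← exp_add]
    ring_nf
  simp_rw [hsplit]
  rw [EuclideanSpace.integral_fin_three_eq_complex_prod
      (fun z ↦ ‖z‖ ^ a * rexp (-‖z‖ ^ 2)) (fun t ↦ rexp (-1 * t ^ 2)),
    integral_gaussian, div_one]
  have h := Complex.integral_rpow_mul_exp_neg_rpow one_le_two ha
  simp only [rpow_two] at h
  rw [h, mul_div_cancel_left₀ π two_ne_zero]

theorem highestWeightMoment_nonneg (a : ℝ) : 0 ≤ highestWeightMoment a :=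
  integral_nonneg fun _ ↦ rpow_nonneg (norm_nonneg _) a

theorem highestWeightMoment_mul_Gamma {a : ℝ} (ha : -2 < a) :
    highestWeightMoment a * Gamma ((a + 2) / 2 + 1 / 2) = 2 * π * √π * Gamma ((a + 2) / 2) := by
  have h := (integral_highestWeight_mul_gaussian_eq_moment_mul a (by linarith)).symm.trans
    (integral_highestWeight_mul_gaussian a ha)
  rw [show (a + 2) / 2 + 1 / 2 = (a + 3) / 2 by ring]
  linear_combination 2 * h

theorem div_sqrt_le_highestWeightMoment {a : ℝ} (ha : -2 < a) :
    2 * π * √π / √((a + 2) / 2) ≤ highestWeightMoment a := by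
  set x := (a + 2) / 2 with hx_def
  have hx : 0 < x := by linarith
  have hΓ := Gamma_pos_of_pos hx
  have key : 2 * π * √π * Gamma x ≤ highestWeightMoment a * √x * Gamma x :=
    calc 2 * π * √π * Gamma x = highestWeightMoment a * Gamma (x + 1 / 2) :=
          (highestWeightMoment_mul_Gamma ha).symm
      _ ≤ highestWeightMoment a * (√x * Gamma x) :=
          mul_le_mul_of_nonneg_left (Gamma_add_half_le_sqrt_mul_Gamma hx)
            (highestWeightMoment_nonneg a)
      _ = highestWeightMoment a * √x * Gamma x := by ring
  rw [div_le_iff₀ (sqrt_pos.2 hx)]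
  exact le_of_mul_le_mul_right key hΓ

theorem highestWeightMoment_le_div_sqrt {a : ℝ} (ha : -1 ≤ a) :
    highestWeightMoment a ≤ √2 * (2 * π * √π) / √((a + 2) / 2) := by
  set x := (a + 2) / 2 with hx_def
  have hx : 1 / 2 ≤ x := by linarith
  have hx0 : 0 < x := by linarith
  have hΓ := Gamma_pos_of_pos (by linarith : 0 < x + 1 / 2)
  have key : x * highestWeightMoment a * Gamma (x + 1 / 2) ≤
      2 * π * √π * √(x + 1 / 2) * Gamma (x + 1 / 2) :=
    calc x * highestWeightMoment a * Gamma (x + 1 / 2) = 2 * π * √π * (x * Gamma x) := by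
          rw [mul_assoc, highestWeightMoment_mul_Gamma (by linarith)]; ring
      _ ≤ 2 * π * √π * (√(x + 1 / 2) * Gamma (x + 1 / 2)) :=
          mul_le_mul_of_nonneg_left (mul_Gamma_le_sqrt_mul_Gamma_add_half hx0)
            (by positivity)
      _ = 2 * π * √π * √(x + 1 / 2) * Gamma (x + 1 / 2) := by ring
  have hsqrt : √(x + 1 / 2) ≤ √2 * √x := by
    rw [← sqrt_mul zero_le_two]; exact sqrt_le_sqrt (by linarith)
  have hJ := le_of_mul_le_mul_right key hΓ
  have h : √x * (highestWeightMoment a * √x) ≤ √x * (√2 * (2 * π * √π)) :=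
    calc √x * (highestWeightMoment a * √x) = x * highestWeightMoment a := by
          rw [mul_comm (highestWeightMoment a), ← mul_assoc, mul_self_sqrt hx0.le]
      _ ≤ 2 * π * √π * (√2 * √x) := hJ.trans (mul_le_mul_of_nonneg_left hsqrt (by positivity))
      _ = √x * (√2 * (2 * π * √π)) := by ring
  rw [le_div_iff₀ (sqrt_pos.2 hx0)]
  exact le_of_mul_le_mul_left h (sqrt_pos.2 hx0)

/-- Two-sided bound for the `L^p(S²)` norms of the highest-weight spherical harmonics
`ψ̃_k(x) = (x₁+ix₂)^k`: for `1 ≤ p < ∞` there are `c, C > 0` such that for all `k ≥ 1`,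
`c (1+k)^{−1/(2p)} ≤ (∫_{S²} |x₁+ix₂|^{kp} dσ)^{1/p} ≤ C (1+k)^{−1/(2p)}`. -/
theorem highestWeight_Lp_norm_asymptotics (p : ℝ) (hp1 : 1 ≤ p) :
    ∃ c C : ℝ, 0 < c ∧ 0 < C ∧ ∀ k : ℕ, 1 ≤ k →
      c * (1 + (k : ℝ)) ^ (-(1 / (2 * p))) ≤
        (∫ x : sphere (0 : EuclideanSpace ℝ (Fin 3)) 1,
            ‖((x : EuclideanSpace ℝ (Fin 3)) 0 : ℂ) +
              Complex.I * ((x : EuclideanSpace ℝ (Fin 3)) 1)‖ ^ ((k : ℝ) * p)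
          ∂sphereMeasure) ^ (1 / p) ∧
      (∫ x : sphere (0 : EuclideanSpace ℝ (Fin 3)) 1,
            ‖((x : EuclideanSpace ℝ (Fin 3)) 0 : ℂ) +
              Complex.I * ((x : EuclideanSpace ℝ (Fin 3)) 1)‖ ^ ((k : ℝ) * p)
          ∂sphereMeasure) ^ (1 / p) ≤
        C * (1 + (k : ℝ)) ^ (-(1 / (2 * p))) := by
  have hp : 0 < p := by linarith
  set K := 2 * π * √π
  refine ⟨(K / √p) ^ (1 / p), (√2 * K / √(p / 4)) ^ (1 / p), by positivity, by positivity,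
    fun k hk ↦ ?_⟩
  have hk1 : (1 : ℝ) ≤ k := by exact_mod_cast hk
  have ha : -1 ≤ (k : ℝ) * p := by nlinarith
  have ht : 0 ≤ 1 + (k : ℝ) := by positivity
  have hupper : ((k : ℝ) * p + 2) / 2 ≤ p * (1 + k) := by nlinarith
  have hlower : p / 4 * (1 + k) ≤ ((k : ℝ) * p + 2) / 2 := by nlinarith
  rw [← div_sqrt_rpow_one_div (by positivity) ht, ← div_sqrt_rpow_one_div (by positivity) ht,
    div_div, div_div, ← sqrt_mul hp.le, ← sqrt_mul (by positivity)]
  refine ⟨rpow_le_rpow (by positivity) ?_ (by positivity),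
    rpow_le_rpow (highestWeightMoment_nonneg _) ?_ (by positivity)⟩
  · exact le_trans (by gcongr) (div_sqrt_le_highestWeightMoment (by linarith))
  · exact (highestWeightMoment_le_div_sqrt ha).trans (by gcongr)
end

section
/- Let 0 < δ < 1. If k and k' are natural numbers with |k − k'| > 2, μ_k > 2/δ, and μ_{k'} > 2/δ, then the resonance sets are disjoint: σ_k^δ ∩ σ_{k'}^δ = ∅. -/
/-- `μ_n = √(n(n+1))`, the square root of the `n`-th eigenvalue of `−Δ` on `S²`. -/
noncomputable def mu (n : ℕ) : ℝ := Real.sqrt (n * (n + 1))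

/-- The resonance set `σ_k^δ`: triples `(k₁,k₂,k₃)` with
`|μ_k − √(max(μ_{k₁}² − μ_{k₂}² + μ_{k₃}², 0))| ≤ 1` or `μ_k ≤ 1/δ`. -/
def resSet (δ : ℝ) (k : ℕ) : Set (ℕ × ℕ × ℕ) :=
  {t | |mu k - Real.sqrt (max (mu t.1 ^ 2 - mu t.2.1 ^ 2 + mu t.2.2 ^ 2) 0)| ≤ 1 ∨
    mu k ≤ 1 / δ}

/-! Since `k ≤ μ_k < k + 1`, two frequencies `μ_k`, `μ_{k'}` with `|k − k'| ≥ 3` are more than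
`2` apart. Above the threshold `1/δ` membership in `σ_k^δ` means the frequency of the triple is
within `1` of `μ_k`, so by the triangle inequality no triple can be within `1` of both. -/

lemma le_mu (n : ℕ) : (n : ℝ) ≤ mu n :=
  Real.le_sqrt_of_sq_le (by nlinarith)

lemma mu_lt (n : ℕ) : mu n < n + 1 := by
  rw [mu, Real.sqrt_lt' (by positivity)]
  nlinarith

lemma abs_mu_sub_mu_sub_lt_one (a b : ℕ) : |(mu a - mu b) - ((a : ℝ) - b)| < 1 := by
  have := le_mu a; have := le_mu b; have := mu_lt a; have := mu_lt b
  rw [abs_sub_lt_iff]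
  constructor <;> linarith

lemma abs_natCast_sub_lt_abs_mu_sub_add_one (a b : ℕ) : |(a : ℝ) - b| < |mu a - mu b| + 1 := by
  have := abs_sub_abs_le_abs_sub ((a : ℝ) - b) (mu a - mu b)
  rw [abs_sub_comm ((a : ℝ) - b)] at this
  linarith [abs_mu_sub_mu_sub_lt_one a b]

lemma mem_resSet_iff_of_one_div_lt {δ : ℝ} {k : ℕ} (hk : 1 / δ < mu k) (t : ℕ × ℕ × ℕ) :
    t ∈ resSet δ k ↔
      |mu k - Real.sqrt (max (mu t.1 ^ 2 - mu t.2.1 ^ 2 + mu t.2.2 ^ 2) 0)| ≤ 1 := by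
  simp only [resSet, Set.mem_ofPred_eq, not_le.mpr hk, or_false]

theorem resSet_disjoint_general {δ : ℝ} (hδ0 : 0 < δ) {k k' : ℕ}
    (hkk' : |(k : ℝ) - (k' : ℝ)| > 2) (hk : mu k > 2 / δ) (hk' : mu k' > 2 / δ) :
    resSet δ k ∩ resSet δ k' = ∅ := by
  have hgap : (3 : ℝ) ≤ |(k : ℝ) - k'| := by
    have : (2 : ℤ) < |(k : ℤ) - k'| := by exact_mod_cast hkk'
    exact_mod_cast (this : (3 : ℤ) ≤ _)
  have h12 : 1 / δ < 2 / δ := by gcongr; norm_num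
  refine Set.eq_empty_iff_forall_notMem.mpr fun t ⟨ht, ht'⟩ => ?_
  rw [mem_resSet_iff_of_one_div_lt (h12.trans hk)] at ht
  rw [mem_resSet_iff_of_one_div_lt (h12.trans hk'), abs_sub_comm] at ht'
  have htri := abs_sub_le (mu k) (Real.sqrt (max (mu t.1 ^ 2 - mu t.2.1 ^ 2 + mu t.2.2 ^ 2) 0)) (mu k')
  linarith [abs_natCast_sub_lt_abs_mu_sub_add_one k k']

/-- Disjointness of the resonance sets: if `|k − k'| > 2` and `μ_k, μ_{k'} > 2/δ`,
then `σ_k^δ ∩ σ_{k'}^δ = ∅`. -/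
theorem resSet_disjoint {δ : ℝ} (hδ0 : 0 < δ) (hδ1 : δ < 1) {k k' : ℕ}
    (hkk' : |(k : ℝ) - (k' : ℝ)| > 2) (hk : mu k > 2 / δ) (hk' : mu k' > 2 / δ) :
    resSet δ k ∩ resSet δ k' = ∅ :=
  resSet_disjoint_general hδ0 hkk' hk hk'
end

section
/- There exists a constant c > 0 such that for every 0 < δ < 1 and all natural numbers k, k₁, k₂, k₃ with (k₁,k₂,k₃) ∉ σ_k^δ, one has |μ_k² − μ_{k₁}² + μ_{k₂}² − μ_{k₃}²| ≥ c · ⟨μ_k − s⟩ · ⟨μ_k⟩, where s = √(max(μ_{k₁}² − μ_{k₂}² + μ_{k₃}², 0)). -/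
/-!
Outside the resonance set both `μ_k` and `|μ_k − s|` exceed `1`, so each Japanese bracket is at
most `√2` times its argument, and `⟨μ_k − s⟩⟨μ_k⟩ ≤ 2 |μ_k − s| μ_k ≤ 2 |μ_k − s| (μ_k + s)
= 2 |μ_k² − s²|`. Since `s² = max E 0` is the phase `E = μ_{k₁}² − μ_{k₂}² + μ_{k₃}²` clipped at
`0` and `μ_k² ≥ 0`, clipping only brings `s²` closer to `μ_k²`; hence `c = 1/2` works.
-/

lemma jb_le_sqrt_two_mul_abs {x : ℝ} (hx : 1 ≤ |x|) : jb x ≤ √2 * |x| := by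
  calc jb x = √(1 + |x| ^ 2) := by rw [jb, sq_abs]
    _ ≤ √(2 * |x| ^ 2) := Real.sqrt_le_sqrt (by nlinarith)
    _ = √2 * |x| := by rw [Real.sqrt_mul zero_le_two, Real.sqrt_sq (abs_nonneg x)]

lemma abs_sq_sub_sq_sqrt_max_le {a : ℝ} (E : ℝ) : |a ^ 2 - √(max E 0) ^ 2| ≤ |a ^ 2 - E| := by
  rw [Real.sq_sqrt (le_max_right E 0)]
  rcases le_total 0 E with hE | hE
  · rw [max_eq_left hE]
  · rw [max_eq_right hE, sub_zero, abs_of_nonneg (sq_nonneg a), abs_of_nonneg (by nlinarith)]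
    linarith

lemma jb_sub_sqrt_max_mul_jb_le {a E : ℝ} (ha : 1 ≤ a) (hres : 1 ≤ |a - √(max E 0)|) :
    jb (a - √(max E 0)) * jb a ≤ 2 * |a ^ 2 - E| := by
  set s := √(max E 0)
  have hs : 0 ≤ s := Real.sqrt_nonneg _
  have ha' : 1 ≤ |a| := by rwa [abs_of_nonneg (by linarith)]
  calc jb (a - s) * jb a ≤ (√2 * |a - s|) * (√2 * |a|) :=
        mul_le_mul (jb_le_sqrt_two_mul_abs hres) (jb_le_sqrt_two_mul_abs ha')
          (Real.sqrt_nonneg _) (by positivity)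
    _ = 2 * (|a - s| * a) := by
        rw [abs_of_nonneg (by linarith : 0 ≤ a), mul_mul_mul_comm,
          Real.mul_self_sqrt zero_le_two]
    _ ≤ 2 * (|a - s| * (a + s)) := by gcongr; linarith
    _ = 2 * |a ^ 2 - s ^ 2| := by
        rw [← abs_of_nonneg (by linarith : 0 ≤ a + s), ← abs_mul]
        ring_nf
    _ ≤ 2 * |a ^ 2 - E| := mul_le_mul_of_nonneg_left (abs_sq_sub_sq_sqrt_max_le E) zero_le_two

/-- Lower bound on the non-resonant phase: there is `c > 0` such that for all
`0 < δ < 1` and all `(k₁,k₂,k₃) ∉ σ_k^δ`,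
`|μ_k² − μ_{k₁}² + μ_{k₂}² − μ_{k₃}²| ≥ c ⟨μ_k − s⟩ ⟨μ_k⟩` with
`s = √(max(μ_{k₁}² − μ_{k₂}² + μ_{k₃}², 0))`. -/
theorem nonresonant_phase_lower_bound :
    ∃ c : ℝ, 0 < c ∧ ∀ (δ : ℝ), 0 < δ → δ < 1 → ∀ (k k₁ k₂ k₃ : ℕ),
      (k₁, k₂, k₃) ∉ resSet δ k →
      |mu k ^ 2 - mu k₁ ^ 2 + mu k₂ ^ 2 - mu k₃ ^ 2| ≥
        c * jb (mu k - Real.sqrt (max (mu k₁ ^ 2 - mu k₂ ^ 2 + mu k₃ ^ 2) 0)) * jb (mu k) := by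
  refine ⟨1 / 2, one_half_pos, fun δ hδ hδ1 k k₁ k₂ k₃ hmem => ?_⟩
  simp only [resSet, Set.mem_ofPred_eq, not_or, not_le] at hmem
  obtain ⟨hres, hlarge⟩ := hmem
  have hmu : 1 ≤ mu k := by
    have : 1 ≤ 1 / δ := by rw [le_div_iff₀ hδ]; linarith
    linarith
  have hbound := jb_sub_sqrt_max_mul_jb_le hmu hres.le
  have hphase : mu k ^ 2 - mu k₁ ^ 2 + mu k₂ ^ 2 - mu k₃ ^ 2
      = mu k ^ 2 - (mu k₁ ^ 2 - mu k₂ ^ 2 + mu k₃ ^ 2) := by ring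
  rw [ge_iff_le, hphase]
  linarith
end

section
/- Let θ : ℝ → ℂ be a Schwartz function and let 1/2 < b < 1. Then there exists a constant c > 0 such that for every T with 0 < T ≤ 1, ∫_ℝ ⟨τ⟩^{2b} · T² · |θ̂(Tτ)|² dτ ≤ c · T^{1−2b}, where θ̂(τ) = ∫_ℝ e^{−itτ} θ(t) dt is the Fourier transform of θ. -/
open MeasureTheory

/-- The Fourier transform `θ̂(τ) = ∫ e^{−itτ} θ(t) dt`. -/
noncomputable def ftransform (θ : ℝ → ℂ) (τ : ℝ) : ℂ :=
  ∫ t : ℝ, Complex.exp (-Complex.I * t * τ) * θ t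

/-! The Fourier transform of a Schwartz function is Schwartz, and `θ̂(σ) = 𝓕θ(σ/2π)`, so
`‖θ̂(σ)‖ ≤ C (1 + σ²)⁻¹`. For `T ≤ 1` and `b ≤ 1` we have
`T^{2b} ⟨τ⟩^{2b} = (T² + (Tτ)²)^b ≤ 1 + (Tτ)²`, so the integrand is dominated by
`C² T^{2−2b} (1 + (Tτ)²)⁻¹`, whose integral is `π C² T^{1−2b}`. -/

open Real FourierTransform

lemma ftransform_eq_fourier (θ : ℝ → ℂ) (σ : ℝ) :
    ftransform θ σ = 𝓕 θ (σ / (2 * π)) := by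
  rw [Real.fourier_real_eq_integral_exp_smul]
  refine integral_congr_ae (.of_forall fun t => ?_)
  simp only [smul_eq_mul]
  congr 2
  push_cast
  field_simp

lemma SchwartzMap.norm_le_div_one_add_norm_sq {E F : Type*} [NormedAddCommGroup E]
    [NormedSpace ℝ E] [NormedAddCommGroup F] [NormedSpace ℝ F] (g : SchwartzMap E F) :
    ∃ C, 0 < C ∧ ∀ x, ‖g x‖ ≤ C / (1 + ‖x‖ ^ 2) := by
  obtain ⟨C₀, hC₀, h₀⟩ := g.decay 0 0
  obtain ⟨C₂, hC₂, h₂⟩ := g.decay 2 0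
  refine ⟨C₀ + C₂, by positivity, fun x => ?_⟩
  specialize h₀ x
  specialize h₂ x
  simp only [norm_iteratedFDeriv_zero, pow_zero, one_mul] at h₀ h₂
  rw [le_div_iff₀ (by positivity)]
  linarith

lemma ftransform_norm_le (θ : SchwartzMap ℝ ℂ) :
    ∃ C, 0 < C ∧ ∀ σ, ‖ftransform θ σ‖ ≤ C / (1 + σ ^ 2) := by
  let dilate : ℝ ≃L[ℝ] ℝ :=
    ContinuousLinearEquiv.unitsEquivAut ℝ (Units.mk0 (2 * π)⁻¹ (by positivity))
  obtain ⟨C, hC, hbound⟩ :=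
    (SchwartzMap.compCLMOfContinuousLinearEquiv ℝ dilate (𝓕 θ)).norm_le_div_one_add_norm_sq
  refine ⟨C, hC, fun σ => ?_⟩
  simpa [ftransform_eq_fourier, dilate, SchwartzMap.fourier_coe, div_eq_mul_inv] using hbound σ

lemma rpow_mul_jb_rpow_le_one_add_sq {T b : ℝ} (hT : 0 ≤ T) (hT1 : T ≤ 1) (hb0 : 0 ≤ b)
    (hb1 : b ≤ 1) (τ : ℝ) : T ^ (2 * b) * jb τ ^ (2 * b) ≤ 1 + (T * τ) ^ 2 := by
  have hjb : 0 ≤ jb τ := Real.sqrt_nonneg _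
  have hsq : (T * jb τ) ^ 2 = T ^ 2 + (T * τ) ^ 2 := by
    rw [mul_pow, jb, Real.sq_sqrt (by positivity)]
    ring
  have hle : T ^ 2 + (T * τ) ^ 2 ≤ 1 + (T * τ) ^ 2 := by nlinarith
  calc T ^ (2 * b) * jb τ ^ (2 * b) = ((T * jb τ) ^ 2) ^ b := by
        rw [← Real.mul_rpow hT hjb, Real.rpow_mul (by positivity), Real.rpow_two]
    _ ≤ (1 + (T * τ) ^ 2) ^ b := by rw [hsq]; gcongr
    _ ≤ 1 + (T * τ) ^ 2 := Real.rpow_le_self_of_one_le (by nlinarith) hb1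

lemma integral_inv_one_add_mul_sq {T : ℝ} (hT : 0 < T) :
    ∫ τ : ℝ, (1 + (T * τ) ^ 2)⁻¹ = π / T := by
  rw [Measure.integral_comp_mul_left (fun x : ℝ => (1 + x ^ 2)⁻¹) T, integral_univ_inv_one_add_sq,
    smul_eq_mul, abs_of_pos (inv_pos.2 hT), inv_mul_eq_div]

lemma jb_rpow_mul_rescaled_sq_le {E : Type*} [NormedAddCommGroup E] {F : ℝ → E}
    {C T b : ℝ} (hF : ∀ σ, ‖F σ‖ ≤ C / (1 + σ ^ 2)) (hT : 0 < T) (hT1 : T ≤ 1) (hb0 : 0 ≤ b)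
    (hb1 : b ≤ 1) (τ : ℝ) :
    jb τ ^ (2 * b) * (T ^ 2 * ‖F (T * τ)‖ ^ 2) ≤
      C ^ 2 * T ^ (2 - 2 * b) * (1 + (T * τ) ^ 2)⁻¹ := by
  have hT2 : T ^ 2 = T ^ (2 - 2 * b) * T ^ (2 * b) := by
    rw [← Real.rpow_add hT, sub_add_cancel, Real.rpow_two]
  calc jb τ ^ (2 * b) * (T ^ 2 * ‖F (T * τ)‖ ^ 2)
      = T ^ (2 - 2 * b) * (T ^ (2 * b) * jb τ ^ (2 * b)) * ‖F (T * τ)‖ ^ 2 := by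
        rw [hT2]; ring
    _ ≤ T ^ (2 - 2 * b) * (1 + (T * τ) ^ 2) * (C / (1 + (T * τ) ^ 2)) ^ 2 := by
        gcongr
        · exact rpow_mul_jb_rpow_le_one_add_sq hT.le hT1 hb0 hb1 τ
        · exact hF _
    _ = C ^ 2 * T ^ (2 - 2 * b) * (1 + (T * τ) ^ 2)⁻¹ := by
        field_simp

/-- For a Schwartz cutoff `θ` and `1/2 < b < 1`, the rescaled cutoffs `θ_T(t) = θ(t/T)`
satisfy `∫ ⟨τ⟩^{2b} T² |θ̂(Tτ)|² dτ ≤ c T^{1−2b}` uniformly for `0 < T ≤ 1`. -/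
theorem rescaled_cutoff_Xb_bound (θ : SchwartzMap ℝ ℂ) (b : ℝ) (hb1 : 1 / 2 < b)
    (hb2 : b < 1) :
    ∃ c : ℝ, 0 < c ∧ ∀ T : ℝ, 0 < T → T ≤ 1 →
      ∫ τ : ℝ, jb τ ^ (2 * b) * (T ^ 2 * ‖ftransform (fun t => θ t) (T * τ)‖ ^ 2) ≤
        c * T ^ (1 - 2 * b) := by
  obtain ⟨C, hC, hθ⟩ := ftransform_norm_le θ
  refine ⟨C ^ 2 * π, by positivity, fun T hT hT1 => ?_⟩
  have hdominant : Integrable fun τ : ℝ => C ^ 2 * T ^ (2 - 2 * b) * (1 + (T * τ) ^ 2)⁻¹ :=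
    (integrable_inv_one_add_sq.comp_mul_left' hT.ne').const_mul _
  calc ∫ τ : ℝ, jb τ ^ (2 * b) * (T ^ 2 * ‖ftransform (fun t => θ t) (T * τ)‖ ^ 2)
      ≤ ∫ τ : ℝ, C ^ 2 * T ^ (2 - 2 * b) * (1 + (T * τ) ^ 2)⁻¹ :=
        integral_mono_of_nonneg (.of_forall fun τ => by unfold jb; positivity) hdominant
          (.of_forall (jb_rpow_mul_rescaled_sq_le hθ hT hT1 (by linarith) hb2.le))
    _ = C ^ 2 * π * T ^ (1 - 2 * b) := by
        have hexp : T ^ (1 - 2 * b) = T ^ (2 - 2 * b) / T := by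
          rw [← Real.rpow_sub_one hT.ne']; ring_nf
        rw [integral_const_mul, integral_inv_one_add_mul_sq hT, hexp]
        ring
end
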